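/- For every tiling f of ℤ² by the Wang set 𝒯_D and every y ∈ ℤ, the biinfinite binary word x ↦ s(f(x,y)) (the south colors read along row y) contains no occurrence of the factor 010 and no occurrence of the factor 101. -/
import Mathlib


structure WangTile (H V : Type*) where
  west : H
  east : H
  south : V
  north : V
deriving DecidableEq

def TilingOn {H V : Type*} (T : Set (WangTile H V)) (X : Set (ℤ × ℤ))
    (f : ℤ × ℤ → WangTile H V) : Prop :=
  (∀ p ∈ X, f p ∈ T) ∧
  (∀ x y : ℤ, (x, y) ∈ X → (x + 1, y) ∈ X →
    (f (x, y)).east = (f (x + 1, y)).west) ∧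
  (∀ x y : ℤ, (x, y) ∈ X → (x, y + 1) ∈ X →
    (f (x, y)).north = (f (x, y + 1)).south)

def Tiling {H V : Type*} (T : Set (WangTile H V)) (f : ℤ × ℤ → WangTile H V) : Prop :=
  TilingOn T Set.univ f

def TilesPlane {H V : Type*} (T : Set (WangTile H V)) : Prop :=
  ∃ f, Tiling T f

def PeriodicTiling {H V : Type*} (f : ℤ × ℤ → WangTile H V) : Prop :=
  ∃ u v : ℤ, (u, v) ≠ (0, 0) ∧ ∀ x y : ℤ, f (x + u, y + v) = f (x, y)

def Aperiodic {H V : Type*} (T : Set (WangTile H V)) : Prop :=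
  TilesPlane T ∧ ∀ f, Tiling T f → ¬ PeriodicTiling f

def MinimallyAperiodic {H V : Type*} (T : Set (WangTile H V)) : Prop :=
  Aperiodic T ∧ ∀ S : Set (WangTile H V), S ⊂ T → ¬ TilesPlane S

/-- The twenty horizontal colors of the Wang set `𝒯_D = 𝒯_a ∪ 𝒯_b`
(`a,…,j` for `𝒯_a` and `K,…,R` for `𝒯_b`). -/
inductive HC
  | a | b | c | d | e | f | g | h | i | j
  | K | L | M | M' | N | O | O' | P | Q | R
deriving DecidableEq

open HC in
/-- The Wang set `𝒯_a`: horizontal colors `a,…,j`, vertical colors `0, 1`.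
Tiles are written `⟨west, east, south, north⟩`. -/
def Ta : Set (WangTile HC (Fin 2)) :=
  { ⟨a, b, 1, 0⟩, ⟨f, b, 1, 1⟩, ⟨g, a, 1, 1⟩, ⟨e, f, 1, 1⟩, ⟨c, d, 1, 0⟩,
    ⟨b, c, 1, 0⟩, ⟨b, g, 1, 1⟩, ⟨d, e, 1, 1⟩, ⟨i, j, 0, 0⟩, ⟨c, i, 0, 0⟩,
    ⟨d, h, 0, 0⟩, ⟨j, a, 0, 0⟩, ⟨h, c, 0, 0⟩, ⟨h, g, 0, 1⟩ }

open HC in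
/-- The Wang set `𝒯_b`: horizontal colors `K,…,R`, vertical colors `0, 1`. -/
def Tb : Set (WangTile HC (Fin 2)) :=
  { ⟨P, R, 1, 1⟩, ⟨M', K, 1, 1⟩, ⟨R, M, 1, 1⟩, ⟨R, M', 1, 1⟩, ⟨Q, O', 0, 0⟩,
    ⟨N, O, 0, 1⟩, ⟨P, Q, 0, 1⟩, ⟨M, N, 0, 1⟩, ⟨R, L, 0, 0⟩, ⟨K, L, 0, 1⟩,
    ⟨O, R, 0, 0⟩, ⟨O, P, 0, 1⟩, ⟨L, M, 0, 1⟩, ⟨O', R, 0, 0⟩ }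

/-- The Wang set `𝒯_D = 𝒯_a ∪ 𝒯_b`. -/
def TD : Set (WangTile HC (Fin 2)) := Ta ∪ Tb


open HC in
def TDlist : List (WangTile HC (Fin 2)) :=
  [ ⟨a, b, 1, 0⟩, ⟨f, b, 1, 1⟩, ⟨g, a, 1, 1⟩, ⟨e, f, 1, 1⟩, ⟨c, d, 1, 0⟩,
    ⟨b, c, 1, 0⟩, ⟨b, g, 1, 1⟩, ⟨d, e, 1, 1⟩, ⟨i, j, 0, 0⟩, ⟨c, i, 0, 0⟩,
    ⟨d, h, 0, 0⟩, ⟨j, a, 0, 0⟩, ⟨h, c, 0, 0⟩, ⟨h, g, 0, 1⟩,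
    ⟨P, R, 1, 1⟩, ⟨M', K, 1, 1⟩, ⟨R, M, 1, 1⟩, ⟨R, M', 1, 1⟩, ⟨Q, O', 0, 0⟩,
    ⟨N, O, 0, 1⟩, ⟨P, Q, 0, 1⟩, ⟨M, N, 0, 1⟩, ⟨R, L, 0, 0⟩, ⟨K, L, 0, 1⟩,
    ⟨O, R, 0, 0⟩, ⟨O, P, 0, 1⟩, ⟨L, M, 0, 1⟩, ⟨O', R, 0, 0⟩ ]

lemma mem_TDlist {t : WangTile HC (Fin 2)} (h : t ∈ TD) : t ∈ TDlist := by
  simp only [TD, Ta, Tb, Set.mem_union, Set.mem_insert_iff, Set.mem_singleton_iff] at h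
  rcases h with ((h|h|h|h|h|h|h|h|h|h|h|h|h|h)|(h|h|h|h|h|h|h|h|h|h|h|h|h|h)) <;>
    subst h <;> decide

lemma no_north_010 :
    ∀ t1 ∈ TDlist, ∀ t2 ∈ TDlist, ∀ t3 ∈ TDlist,
      t1.east = t2.west → t2.east = t3.west →
      ¬ (t1.north = 0 ∧ t2.north = 1 ∧ t3.north = 0) := by decide

lemma no_south_101 :
    ∀ t1 ∈ TDlist, ∀ t2 ∈ TDlist, ∀ t3 ∈ TDlist,
      t1.east = t2.west → t2.east = t3.west →
      ¬ (t1.south = 1 ∧ t2.south = 0 ∧ t3.south = 1) := by decide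

/-- in any tiling of the plane by `𝒯_D`, the biinfinite binary word of
south colors along any row contains no factor `010` and no factor `101`. -/
theorem TD_rows_no_010_101 (f : ℤ × ℤ → WangTile HC (Fin 2)) (hf : Tiling TD f)
    (y : ℤ) :
    (¬ ∃ x : ℤ, (f (x, y)).south = 0 ∧ (f (x + 1, y)).south = 1 ∧
      (f (x + 2, y)).south = 0) ∧
    (¬ ∃ x : ℤ, (f (x, y)).south = 1 ∧ (f (x + 1, y)).south = 0 ∧
      (f (x + 2, y)).south = 1) := by
  obtain ⟨hmem, hhor, hver⟩ := hf
  constructor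
  · rintro ⟨x, h0, h1, h2⟩
    have m1 := mem_TDlist (hmem (x, y - 1) trivial)
    have m2 := mem_TDlist (hmem (x + 1, y - 1) trivial)
    have m3 := mem_TDlist (hmem (x + 2, y - 1) trivial)
    have e1 := hhor x (y - 1) trivial trivial
    have e2 := hhor (x + 1) (y - 1) trivial trivial
    have v1 := hver x (y - 1) trivial trivial
    have v2 := hver (x + 1) (y - 1) trivial trivial
    have v3 := hver (x + 2) (y - 1) trivial trivial
    rw [show y - 1 + 1 = y by ring] at v1 v2 v3
    rw [show x + 1 + 1 = x + 2 by ring] at e2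
    exact no_north_010 _ m1 _ m2 _ m3 e1 e2
      ⟨v1.trans h0, v2.trans h1, v3.trans h2⟩
  · rintro ⟨x, h0, h1, h2⟩
    have m1 := mem_TDlist (hmem (x, y) trivial)
    have m2 := mem_TDlist (hmem (x + 1, y) trivial)
    have m3 := mem_TDlist (hmem (x + 2, y) trivial)
    have e1 := hhor x y trivial trivial
    have e2 := hhor (x + 1) y trivial trivial
    rw [show x + 1 + 1 = x + 2 by ring] at e2
    exact no_south_101 _ m1 _ m2 _ m3 e1 e2 ⟨h0, h1, h2⟩
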